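/- Let y₁, y₂ > 0 be real numbers satisfying 27·y₁⁴·y₂⁴ − 18·y₁²·y₂² + 4·y₁² + 4·y₂² < 1. Then the set {(x₁,x₂) ∈ ℝ² : C(x₁,x₂) = 0 and E(x₁,x₂) = 0} has exactly 6 elements. -/

import Mathlib

/-!
In the linear coordinates `t = (2x₁ + x₂)/3`, `w = -(x₁ + 2x₂)/3` the two equations read
`t² + tw + w² = 1 - y₁² - y₂²` and `tw(t + w) + y₁²w + y₂²t = 0`. On the fiber `t ≠ 0`,
and eliminating `t²` in favour of the slope `u = w/t` leaves the cubic
`y₁²u³ + u² + u + y₂² = 0`; each of its roots gives the two points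
`t = ±√((1 - y₁² - y₂²)/(u² + u + 1))`. The inequality defining the light zone says
exactly that this cubic has positive discriminant, hence three real roots, so the fiber
has `2 · 3 = 6` points.
-/

open Set

lemma monic_cubic_nonneg_of_le {p q r x : ℝ} (hx : 1 + |p| + |q| + |r| ≤ x) :
    0 ≤ x ^ 3 + p * x ^ 2 + q * x + r := by
  have hx1 : 1 ≤ x := by linarith [abs_nonneg p, abs_nonneg q, abs_nonneg r]
  have hp : -|p| ≤ p := neg_abs_le p
  have hq : -|q| ≤ q := neg_abs_le q
  have hr : -|r| ≤ r := neg_abs_le r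
  nlinarith [mul_le_mul_of_nonneg_left hp (sq_nonneg x),
    mul_le_mul_of_nonneg_left hq (by linarith : (0 : ℝ) ≤ x),
    mul_nonneg (abs_nonneg q) (by nlinarith : (0 : ℝ) ≤ x ^ 2 - x),
    mul_nonneg (abs_nonneg r) (by nlinarith : (0 : ℝ) ≤ x ^ 2 - 1)]

lemma exists_monic_cubic_eq_zero (p q r : ℝ) : ∃ x, x ^ 3 + p * x ^ 2 + q * x + r = 0 := by
  set M := 1 + |p| + |q| + |r|
  have hneg : 0 ≤ M ^ 3 + -p * M ^ 2 + q * M + -r :=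
    monic_cubic_nonneg_of_le (by simp only [M, abs_neg, le_refl])
  have hodd : (-M) ^ 3 + p * (-M) ^ 2 + q * (-M) + r = -(M ^ 3 + -p * M ^ 2 + q * M + -r) := by
    ring
  exact mem_range_of_exists_le_of_exists_ge (by fun_prop)
    ⟨-M, by linarith⟩ ⟨M, monic_cubic_nonneg_of_le le_rfl⟩

lemma exists_cubic_eq_zero {a b c d : ℝ} (ha : a ≠ 0) :
    ∃ x, a * x ^ 3 + b * x ^ 2 + c * x + d = 0 := by
  obtain ⟨x, hx⟩ := exists_monic_cubic_eq_zero (b / a) (c / a) (d / a)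
  refine ⟨x, ?_⟩
  field_simp at hx
  linear_combination hx

lemma cubic_eq_mul_quadratic {a b c d r x : ℝ} (hr : a * r ^ 3 + b * r ^ 2 + c * r + d = 0) :
    a * x ^ 3 + b * x ^ 2 + c * x + d
      = (x - r) * (a * (x * x) + (b + a * r) * x + (c + b * r + a * r ^ 2)) := by
  linear_combination hr

lemma discrim_mul_sq_eq_discr {a b c d r : ℝ} (hr : a * r ^ 3 + b * r ^ 2 + c * r + d = 0) :
    discrim a (b + a * r) (c + b * r + a * r ^ 2) * (3 * a * r ^ 2 + 2 * b * r + c) ^ 2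
      = (⟨a, b, c, d⟩ : Cubic ℝ).discr := by
  simp only [discrim, Cubic.discr]
  linear_combination
    (4 * b ^ 3 - 18 * a * b * c + 27 * a ^ 2 * (d - (a * r ^ 3 + b * r ^ 2 + c * r))) * hr

lemma ncard_cubic_roots_eq_three {a b c d : ℝ} (ha : a ≠ 0)
    (hdisc : 0 < (⟨a, b, c, d⟩ : Cubic ℝ).discr) :
    {x : ℝ | a * x ^ 3 + b * x ^ 2 + c * x + d = 0}.ncard = 3 := by
  obtain ⟨r, hr⟩ := exists_cubic_eq_zero (b := b) (c := c) (d := d) ha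
  set D := discrim a (b + a * r) (c + b * r + a * r ^ 2)
  have hprod := discrim_mul_sq_eq_discr hr
  have hDpos : 0 < D := pos_of_mul_pos_left (hprod ▸ hdisc) (sq_nonneg _)
  -- the quadratic factor at `r` is the derivative of the cubic at `r`
  have hqr : a * (r * r) + (b + a * r) * r + (c + b * r + a * r ^ 2) ≠ 0 := by
    intro h
    rw [← hprod, show 3 * a * r ^ 2 + 2 * b * r + c = 0 by linear_combination h] at hdisc
    simp at hdisc
  set s := √D
  have hs : 0 < s := Real.sqrt_pos.mpr hDpos
  have hroots := quadratic_eq_zero_iff ha (s := s) (Real.mul_self_sqrt hDpos.le).symm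
  rw [ncard_eq_three]
  refine ⟨r, (-(b + a * r) + s) / (2 * a), (-(b + a * r) - s) / (2 * a), ?_, ?_, ?_, ?_⟩
  · intro h
    have hroot := (hroots _).2 (.inl rfl)
    rw [← h] at hroot
    exact hqr hroot
  · intro h
    have hroot := (hroots _).2 (.inr rfl)
    rw [← h] at hroot
    exact hqr hroot
  · rw [Ne, div_left_inj' (mul_ne_zero two_ne_zero ha)]
    linarith
  · ext x
    simp only [mem_ofPred_eq, mem_insert_iff, mem_singleton_iff, cubic_eq_mul_quadratic hr,
      mul_eq_zero, sub_eq_zero, hroots]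

def lagrangianFiber (A B : ℝ) : Set (ℝ × ℝ) :=
  {p | p.1 ^ 2 + p.1 * p.2 + p.2 ^ 2 - 3 * (1 - A - B) = 0 ∧
    2 * p.1 ^ 3 + 3 * p.1 ^ 2 * p.2 + 9 * p.1 * A + 18 * p.2 * A
      - 2 * p.2 ^ 3 - 3 * p.1 * p.2 ^ 2 - 9 * p.2 * B - 18 * p.1 * B = 0}

def fiberPoint (t u : ℝ) : ℝ × ℝ := (t * (u + 2), -(t * (2 * u + 1)))

lemma sq_add_self_add_one_pos (u : ℝ) : 0 < u ^ 2 + u + 1 := by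
  nlinarith [sq_nonneg (2 * u + 1)]

lemma fiberPoint_inj {t t' u u' : ℝ} (ht : t ≠ 0) (h : fiberPoint t u = fiberPoint t' u') :
    t = t' ∧ u = u' := by
  simp only [fiberPoint, Prod.mk.injEq] at h
  obtain ⟨h1, h2⟩ := h
  have htt' : t = t' := by linear_combination (2 / 3 : ℝ) * h1 + (1 / 3 : ℝ) * h2
  subst htt'
  exact ⟨rfl, mul_left_cancel₀ ht (by linear_combination (-1 / 3 : ℝ) * h1 - (2 / 3 : ℝ) * h2)⟩

section

variable {A B : ℝ}

lemma fiberPoint_mem_lagrangianFiber {t u : ℝ} (ht : t ^ 2 * (u ^ 2 + u + 1) = 1 - A - B)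
    (hu : A * u ^ 3 + u ^ 2 + u + B = 0) : fiberPoint t u ∈ lagrangianFiber A B := by
  simp only [lagrangianFiber, fiberPoint, mem_ofPred_eq]
  refine ⟨by linear_combination 3 * ht, ?_⟩
  refine (mul_eq_zero.mp ?_).resolve_right (sq_add_self_add_one_pos u).ne'
  linear_combination (-27 * t * u * (u + 1)) * ht + (-27 * t) * hu

lemma exists_fiberPoint_eq_of_mem_lagrangianFiber (hA : A ≠ 0) (hAB : A + B ≠ 1) {p : ℝ × ℝ}
    (hp : p ∈ lagrangianFiber A B) :
    ∃ t u, t ^ 2 * (u ^ 2 + u + 1) = 1 - A - B ∧ A * u ^ 3 + u ^ 2 + u + B = 0 ∧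
      fiberPoint t u = p := by
  obtain ⟨t, w, rfl⟩ : ∃ t w : ℝ, p = (2 * t + w, -(t + 2 * w)) :=
    ⟨(2 * p.1 + p.2) / 3, -(p.1 + 2 * p.2) / 3, by ext <;> ring⟩
  obtain ⟨hC, hE⟩ := hp
  have ht : t ≠ 0 := by
    rintro rfl
    have hw : w = 0 :=
      (mul_eq_zero.mp (by linear_combination (-1 / 27 : ℝ) * hE)).resolve_left hA
    subst hw
    exact hAB (by linear_combination (1 / 3 : ℝ) * hC)
  obtain ⟨u, rfl⟩ : ∃ u, w = t * u := ⟨w / t, by field_simp⟩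
  have hscale : t ^ 2 * (u ^ 2 + u + 1) = 1 - A - B := by linear_combination (1 / 3 : ℝ) * hC
  have hslope : t ^ 2 * (u * (u + 1)) + (A * u + B) = 0 :=
    (mul_eq_zero.mp (by linear_combination (-1 / 27 : ℝ) * hE)).resolve_left ht
  refine ⟨t, u, hscale, ?_, by simp only [fiberPoint]; ext <;> ring⟩
  linear_combination (u ^ 2 + u + 1) * hslope - (u * (u + 1)) * hscale

noncomputable def fiberScale (A B u : ℝ) : ℝ := √((1 - A - B) / (u ^ 2 + u + 1))

lemma fiberScale_pos (hAB : A + B < 1) (u : ℝ) : 0 < fiberScale A B u :=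
  Real.sqrt_pos.mpr (div_pos (by linarith) (sq_add_self_add_one_pos u))

lemma fiberScale_sq_mul (hAB : A + B < 1) (u : ℝ) :
    fiberScale A B u ^ 2 * (u ^ 2 + u + 1) = 1 - A - B := by
  rw [fiberScale, Real.sq_sqrt (div_nonneg (by linarith) (sq_add_self_add_one_pos u).le),
    div_mul_cancel₀ _ (sq_add_self_add_one_pos u).ne']

lemma lagrangianFiber_eq_image (hA : A ≠ 0) (hAB : A + B < 1) :
    lagrangianFiber A B = (fun σu : ℝ × ℝ ↦ fiberPoint (σu.1 * fiberScale A B σu.2) σu.2) ''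
      ({1, -1} ×ˢ {u | A * u ^ 3 + u ^ 2 + u + B = 0}) := by
  ext p
  constructor
  · intro hp
    obtain ⟨t, u, hscale, hu, rfl⟩ := exists_fiberPoint_eq_of_mem_lagrangianFiber hA hAB.ne hp
    have ht : t ^ 2 = fiberScale A B u ^ 2 := mul_right_cancel₀ (sq_add_self_add_one_pos u).ne'
      (hscale.trans (fiberScale_sq_mul hAB u).symm)
    rcases sq_eq_sq_iff_eq_or_eq_neg.mp ht with rfl | rfl
    · exact ⟨(1, u), ⟨by simp, hu⟩, by simp⟩
    · exact ⟨(-1, u), ⟨by simp, hu⟩, by simp⟩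
  · rintro ⟨⟨σ, u⟩, ⟨hσ, hu⟩, rfl⟩
    have hσ2 : σ ^ 2 = 1 := by rcases hσ with rfl | rfl <;> norm_num
    exact fiberPoint_mem_lagrangianFiber
      (by rw [mul_pow, hσ2, one_mul, fiberScale_sq_mul hAB]) hu

lemma ncard_lagrangianFiber (hA : A ≠ 0) (hAB : A + B < 1) :
    (lagrangianFiber A B).ncard = 2 * {u | A * u ^ 3 + u ^ 2 + u + B = 0}.ncard := by
  rw [lagrangianFiber_eq_image hA hAB, InjOn.ncard_image, ncard_prod,
    ncard_pair (by norm_num : (1 : ℝ) ≠ -1)]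
  rintro ⟨σ, u⟩ ⟨hσ, -⟩ ⟨σ', u'⟩ - h
  have hσ0 : σ ≠ 0 := by rcases hσ with rfl | rfl <;> norm_num
  obtain ⟨hscale, rfl⟩ := fiberPoint_inj (mul_ne_zero hσ0 (fiberScale_pos hAB u).ne') h
  rw [mul_right_cancel₀ (fiberScale_pos hAB u).ne' hscale]

end

theorem stmt_0 (y₁ y₂ : ℝ) (hy₁ : 0 < y₁)
    (h : 27 * y₁^4 * y₂^4 - 18 * y₁^2 * y₂^2 + 4 * y₁^2 + 4 * y₂^2 < 1) :
    ({p : ℝ × ℝ |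
        p.1^2 + p.1 * p.2 + p.2^2 - 3 * (1 - y₁^2 - y₂^2) = 0 ∧
        2 * p.1^3 + 3 * p.1^2 * p.2 + 9 * p.1 * y₁^2 + 18 * p.2 * y₁^2
          - 2 * p.2^3 - 3 * p.1 * p.2^2 - 9 * p.2 * y₂^2 - 18 * p.1 * y₂^2 = 0}).ncard
      = 6 := by
  have hA : y₁ ^ 2 ≠ 0 := by positivity
  have hdisc : 0 < (⟨y₁ ^ 2, 1, 1, y₂ ^ 2⟩ : Cubic ℝ).discr := by
    simp only [Cubic.discr]
    linarith
  -- `4(A + B) < 1 + 18AB - 27A²B² = 4 - 3(1 - 3AB)²` with `A = y₁²`, `B = y₂²`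
  have hAB : y₁ ^ 2 + y₂ ^ 2 < 1 := by nlinarith [sq_nonneg (1 - 3 * y₁ ^ 2 * y₂ ^ 2)]
  have hroots := ncard_cubic_roots_eq_three hA hdisc
  simp only [one_mul] at hroots
  change (lagrangianFiber (y₁ ^ 2) (y₂ ^ 2)).ncard = 6
  rw [ncard_lagrangianFiber hA hAB, hroots]
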